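/- arXiv:2206.02437 — 4 statements merged into one kernel-verified Lean document; each statement's English description precedes it below -/
import Mathlib

section
/- The set function F(Z) = log det(K_Z + σ² I_{|Z|}) defined on subsets Z of a finite ground set D (where K is positive semidefinite and σ² > 0) is submodular: for all A ⊆ B ⊆ D and x ∈ D \ B, F(A ∪ {x}) − F(A) ≥ F(B ∪ {x}) − F(B). -/
open Matrix

variable {D : Type*} [Fintype D] [DecidableEq D]

/-- Principal submatrix of `K` indexed by the finite subset `Z`. -/
def gram (K : Matrix D D ℝ) (Z : Finset D) : Matrix Z Z ℝ :=
  K.submatrix (fun i => (i : D)) (fun j => (j : D))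

/-- The set function `F(Z) = log det(K_Z + σ² I)`. -/
noncomputable def logdetF (K : Matrix D D ℝ) (σ2 : ℝ) (Z : Finset D) : ℝ :=
  Real.log ((gram K Z + σ2 • 1).det)

/-! With `M = K + σ² I`, adding `x ∉ Z` multiplies `det M_Z` by the Schur complement
`s_Z(x) = M_xx - m_Zᵀ M_Z⁻¹ m_Z`, where `m_Z = (M_zx)_{z ∈ Z}`, so `F(Z ∪ {x}) - F(Z) = log s_Z(x)`.
Completing the square, `m_Zᵀ M_Z⁻¹ m_Z` is the maximum of `2⟨m_Z, w⟩ - ⟨w, M_Z w⟩` over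
`w ∈ ℝ^Z`. Extending by zero embeds `ℝ^A` into `ℝ^B` without changing this objective, so the
maximum grows and `s_Z(x)` shrinks as `Z` grows. -/

namespace Matrix

section Extend

variable {m n R : Type*} [Fintype m] [Fintype n] [CommSemiring R]

theorem comp_dotProduct_eq_dotProduct_extend {e : m → n} (he : Function.Injective e)
    (u : n → R) (z : m → R) : (u ∘ e) ⬝ᵥ z = u ⬝ᵥ Function.extend e z 0 :=
  Fintype.sum_of_injective e he _ _
    (fun j hj => by rw [Function.extend_apply' _ _ _ (by simpa using hj), Pi.zero_apply, mul_zero])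
    (fun i => by rw [Function.comp_apply, he.extend_apply])

theorem submatrix_mulVec_eq_mulVec_extend {l : Type*} (P : Matrix n n R) (f : l → n)
    {e : m → n} (he : Function.Injective e) (z : m → R) :
    P.submatrix f e *ᵥ z = (P *ᵥ Function.extend e z 0) ∘ f := by
  ext i
  exact comp_dotProduct_eq_dotProduct_extend he (P (f i)) z

theorem dotProduct_submatrix_mulVec_eq {e : m → n} (he : Function.Injective e)
    (P : Matrix n n R) (z : m → R) :
    z ⬝ᵥ P.submatrix e e *ᵥ z =
      Function.extend e z 0 ⬝ᵥ P *ᵥ Function.extend e z 0 := by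
  rw [submatrix_mulVec_eq_mulVec_extend P e he, dotProduct_comm,
    comp_dotProduct_eq_dotProduct_extend he, dotProduct_comm]

end Extend

section SchurComplement

variable {ι R : Type*} [DecidableEq ι] [CommRing R]

/-- The Schur complement of `M_Z` in `M_{Z ∪ {x}}`. -/
noncomputable def schurCompl (M : Matrix ι ι R) (Z : Finset ι) (x : ι) : R :=
  M x x - (fun j : Z => M x j) ⬝ᵥ (M.submatrix ((↑) : Z → ι) (↑))⁻¹ *ᵥ (fun i : Z => M i x)

theorem det_submatrix_insert (M : Matrix ι ι R) {Z : Finset ι} {x : ι} (hx : x ∉ Z)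
    (hZ : IsUnit (M.submatrix ((↑) : Z → ι) (↑)).det) :
    (M.submatrix ((↑) : ↥(insert x Z) → ι) (↑)).det =
      (M.submatrix ((↑) : Z → ι) (↑)).det * M.schurCompl Z x := by
  let e := (Finset.subtypeInsertEquivOption hx).trans (Equiv.optionEquivSumPUnit.{0} Z)
  have hblocks : (M.submatrix ((↑) : ↥(insert x Z) → ι) (↑)).submatrix e.symm e.symm =
      fromBlocks (M.submatrix ((↑) : Z → ι) ((↑) : Z → ι)) (of fun i _ => M i x)
        (of fun _ (j : Z) => M x j) (of fun _ _ => M x x) := by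
    ext (i | _) (j | _) <;> simp [e, Finset.subtypeInsertEquivOption]
  have := invertibleOfIsUnitDet _ hZ
  rw [← det_submatrix_equiv_self e.symm, hblocks, det_fromBlocks₁₁, det_unique (n := PUnit),
    invOf_eq_nonsing_inv, schurCompl, dotProduct_mulVec]
  rfl

end SchurComplement

namespace PosDef

variable {m n : Type*} [Fintype m] [Fintype n] [DecidableEq m] [DecidableEq n]

theorem two_mul_dotProduct_sub_le {P : Matrix n n ℝ} (hP : P.PosDef) (u w : n → ℝ) :
    2 * (u ⬝ᵥ w) - w ⬝ᵥ P *ᵥ w ≤ u ⬝ᵥ P⁻¹ *ᵥ u := by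
  set z := P⁻¹ *ᵥ u
  have hPz : P *ᵥ z = u := by
    rw [mulVec_mulVec, mul_nonsing_inv _ hP.det_pos.ne'.isUnit, one_mulVec]
  have hzPw : z ⬝ᵥ P *ᵥ w = u ⬝ᵥ w := by
    rw [dotProduct_mulVec, ← mulVec_transpose, isHermitian_iff_isSymm.mp hP.isHermitian, hPz]
  have hsq := hP.posSemidef.dotProduct_mulVec_nonneg (w - z)
  simp only [star_trivial, mulVec_sub, dotProduct_sub, sub_dotProduct, hzPw, hPz] at hsq
  linarith [dotProduct_comm w u, dotProduct_comm z u]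

theorem dotProduct_inv_submatrix_le {P : Matrix n n ℝ} (hP : P.PosDef) {e : m → n}
    (he : Function.Injective e) (u : n → ℝ) :
    (u ∘ e) ⬝ᵥ (P.submatrix e e)⁻¹ *ᵥ (u ∘ e) ≤ u ⬝ᵥ P⁻¹ *ᵥ u := by
  set Q := P.submatrix e e
  set z := Q⁻¹ *ᵥ (u ∘ e)
  have hQz : Q *ᵥ z = u ∘ e := by
    rw [mulVec_mulVec, mul_nonsing_inv _ (hP.submatrix he).det_pos.ne'.isUnit, one_mulVec]
  calc (u ∘ e) ⬝ᵥ Q⁻¹ *ᵥ (u ∘ e) = 2 * ((u ∘ e) ⬝ᵥ z) - z ⬝ᵥ Q *ᵥ z := by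
        rw [hQz, dotProduct_comm z]; ring
    _ = 2 * (u ⬝ᵥ Function.extend e z 0) -
          Function.extend e z 0 ⬝ᵥ P *ᵥ Function.extend e z 0 := by
        rw [comp_dotProduct_eq_dotProduct_extend he, dotProduct_submatrix_mulVec_eq he]
    _ ≤ u ⬝ᵥ P⁻¹ *ᵥ u := hP.two_mul_dotProduct_sub_le u _

variable {ι : Type*} [DecidableEq ι] {M : Matrix ι ι ℝ}

theorem schurCompl_pos (hM : M.PosDef) {Z : Finset ι} {x : ι} (hx : x ∉ Z) :
    0 < M.schurCompl Z x := by
  have hZ := (hM.submatrix (Subtype.val_injective (p := (· ∈ Z)))).det_pos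
  have hdet := (hM.submatrix (Subtype.val_injective (p := (· ∈ insert x Z)))).det_pos
  rw [det_submatrix_insert M hx hZ.ne'.isUnit] at hdet
  exact pos_of_mul_pos_right hdet hZ.le

theorem schurCompl_antitone (hM : M.PosDef) {A B : Finset ι} (hAB : A ⊆ B) (x : ι) :
    M.schurCompl B x ≤ M.schurCompl A x := by
  have hrow (Z : Finset ι) : (fun j : Z => M x j) = fun j : Z => M j x :=
    funext fun j => (isHermitian_iff_isSymm.mp hM.isHermitian).apply j x
  let e : A → B := fun i => ⟨i, hAB i.2⟩
  have he : Function.Injective e := .of_comp (f := ((↑) : B → ι)) Subtype.val_injective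
  simp only [schurCompl, hrow, sub_le_sub_iff_left]
  exact (hM.submatrix Subtype.val_injective).dotProduct_inv_submatrix_le he (fun i : B => M i x)

end PosDef

end Matrix

theorem gram_add_smul_one {ι : Type*} [DecidableEq ι] (K : Matrix ι ι ℝ) (σ2 : ℝ) (Z : Finset ι) :
    _root_.gram K Z + σ2 • 1 = (K + σ2 • 1).submatrix ((↑) : Z → ι) (↑) := by
  rw [_root_.gram, ← submatrix_one (α := ℝ) _ Subtype.val_injective]
  rfl

theorem logdetF_insert_sub_logdetF {ι : Type*} [DecidableEq ι] {K : Matrix ι ι ℝ} {σ2 : ℝ}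
    (hM : (K + σ2 • 1).PosDef) {Z : Finset ι} {x : ι} (hx : x ∉ Z) :
    logdetF K σ2 (insert x Z) - logdetF K σ2 Z = Real.log ((K + σ2 • 1).schurCompl Z x) := by
  have hZ := (hM.submatrix (Subtype.val_injective (p := (· ∈ Z)))).det_pos
  rw [logdetF, logdetF, gram_add_smul_one, gram_add_smul_one,
    det_submatrix_insert _ hx hZ.ne'.isUnit, Real.log_mul hZ.ne' (hM.schurCompl_pos hx).ne',
    add_sub_cancel_left]

/-- `F(Z) = log det(K_Z + σ²I)` is submodular: for `A ⊆ B` and `x ∉ B`,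
`F(A ∪ {x}) − F(A) ≥ F(B ∪ {x}) − F(B)`. -/
theorem logdet_submodular (K : Matrix D D ℝ) (hK : K.PosSemidef)
    (σ2 : ℝ) (hσ : 0 < σ2) (A B : Finset D) (hAB : A ⊆ B) (x : D) (hx : x ∉ B) :
    logdetF K σ2 (insert x B) - logdetF K σ2 B ≤
      logdetF K σ2 (insert x A) - logdetF K σ2 A := by
  have hM : (K + σ2 • 1).PosDef := PosDef.posSemidef_add hK (PosDef.one.smul hσ)
  rw [logdetF_insert_sub_logdetF hM hx, logdetF_insert_sub_logdetF hM fun hxA => hx (hAB hxA)]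
  exact Real.log_le_log (hM.schurCompl_pos hx) (hM.schurCompl_antitone hAB x)
end

section
/- Greedy maximization of a monotone submodular set function F with F(∅) = 0 over subsets of size M achieves at least a (1 − 1/e) fraction of the optimum: if Z_greedy is built by iteratively adding the element with largest marginal gain, then F(Z_greedy) ≥ (1 − 1/e) · max_{|Z| = M} F(Z). -/
variable {D : Type*} [Fintype D] [DecidableEq D]

/-- A set function is submodular if marginal gains are diminishing. -/
def Submodular (F : Finset D → ℝ) : Prop :=
  ∀ A B : Finset D, A ⊆ B → ∀ x ∉ B,
    F (insert x B) - F B ≤ F (insert x A) - F A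

/-- A set function is monotone if it is nondecreasing along inclusions. -/
def MonotoneSet (F : Finset D → ℝ) : Prop :=
  ∀ A B : Finset D, A ⊆ B → F A ≤ F B

lemma submodular_telescope (F : Finset D → ℝ) (hsub : Submodular F) :
    ∀ S A : Finset D, Disjoint S A →
      F (A ∪ S) - F A ≤ ∑ x ∈ S, (F (insert x A) - F A) := by
  intro S
  induction S using Finset.induction_on with
  | empty => simp
  | @insert x S hx ih =>
    intro A hdis
    have hxA : x ∉ A := by
      have := Finset.disjoint_left.mp hdis (Finset.mem_insert_self x S)
      exact this
    have hdis' : Disjoint S A :=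
      (Finset.disjoint_insert_left.mp hdis).2
    have hxAS : x ∉ A ∪ S := by
      simp [hxA, hx]
    have hkey := hsub A (A ∪ S) Finset.subset_union_left x hxAS
    have hIH := ih A hdis'
    have hU : A ∪ insert x S = insert x (A ∪ S) := Finset.union_insert x A S
    rw [hU, Finset.sum_insert hx]
    linarith

/-- Greedy maximization of a monotone submodular function `F` with `F(∅) = 0` over
size-`M` subsets achieves at least a `(1 − 1/e)` fraction of the optimum: if
`Z 0 = ∅` and at each step `j < M` the greedy rule adds an element with largest
marginal gain, then `F (Z M) ≥ (1 − 1/e) · max_{|Z'| = M} F(Z')`. -/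
theorem greedy_submodular_guarantee (F : Finset D → ℝ)
    (hmono : MonotoneSet F) (hsub : Submodular F) (hempty : F ∅ = 0)
    (M : ℕ) (Z : ℕ → Finset D) (hZ0 : Z 0 = ∅)
    (hgreedy : ∀ j < M, ∃ x ∉ Z j,
      Z (j + 1) = insert x (Z j) ∧
      ∀ y ∉ Z j, F (insert y (Z j)) ≤ F (insert x (Z j)))
    (Zopt : Finset D) (hopt_card : Zopt.card = M)
    (hopt : ∀ Z' : Finset D, Z'.card = M → F Z' ≤ F Zopt) :
    (1 - 1 / Real.exp 1) * F Zopt ≤ F (Z M) := by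
  have hopt_nonneg : 0 ≤ F Zopt := by
    have := hmono ∅ Zopt (Finset.empty_subset _); linarith
  rcases Nat.eq_zero_or_pos M with hM0 | hM
  · subst hM0
    have hZe : Zopt = ∅ := Finset.card_eq_zero.mp hopt_card
    rw [hZ0, hZe, hempty]
    simp
  set m : ℝ := (M : ℝ) with hm
  have hm1 : 1 ≤ m := by rw [hm]; exact_mod_cast hM
  have hm0 : 0 < m := lt_of_lt_of_le one_pos hm1
  have hbase : 0 ≤ 1 - 1 / m := by
    rw [sub_nonneg]
    exact (div_le_one hm0).mpr hm1
  have step : ∀ j < M, F Zopt - F (Z (j + 1)) ≤ (1 - 1 / m) * (F Zopt - F (Z j)) := by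
    intro j hj
    obtain ⟨x, hxZ, hZ1, hxmax⟩ := hgreedy j hj
    have hdis : Disjoint (Zopt \ Z j) (Z j) := Finset.sdiff_disjoint
    have h1 : F Zopt - F (Z j) ≤ ∑ y ∈ Zopt \ Z j, (F (insert y (Z j)) - F (Z j)) := by
      have h2 := submodular_telescope F hsub (Zopt \ Z j) (Z j) hdis
      have h3 : F Zopt ≤ F (Z j ∪ (Zopt \ Z j)) := by
        apply hmono
        intro a ha
        simp only [Finset.mem_union, Finset.mem_sdiff]
        tauto
      linarith
    have hgain : 0 ≤ F (Z (j + 1)) - F (Z j) := by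
      rw [hZ1]
      have := hmono (Z j) (insert x (Z j)) (Finset.subset_insert _ _)
      linarith
    have hg : ∀ y ∈ Zopt \ Z j,
        F (insert y (Z j)) - F (Z j) ≤ F (Z (j + 1)) - F (Z j) := by
      intro y hy
      have hyZ : y ∉ Z j := (Finset.mem_sdiff.mp hy).2
      have := hxmax y hyZ
      rw [hZ1]; linarith
    have hsum : ∑ y ∈ Zopt \ Z j, (F (insert y (Z j)) - F (Z j))
        ≤ ((Zopt \ Z j).card : ℝ) * (F (Z (j + 1)) - F (Z j)) := by
      calc ∑ y ∈ Zopt \ Z j, (F (insert y (Z j)) - F (Z j))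
          ≤ ∑ _y ∈ Zopt \ Z j, (F (Z (j + 1)) - F (Z j)) := Finset.sum_le_sum hg
        _ = ((Zopt \ Z j).card : ℝ) * (F (Z (j + 1)) - F (Z j)) := by
            rw [Finset.sum_const, nsmul_eq_mul]
    have hcard : ((Zopt \ Z j).card : ℝ) ≤ m := by
      have h : (Zopt \ Z j).card ≤ M := by
        calc (Zopt \ Z j).card ≤ Zopt.card := Finset.card_le_card Finset.sdiff_subset
          _ = M := hopt_card
      rw [hm]; exact_mod_cast h
    have key : F Zopt - F (Z j) ≤ m * (F (Z (j + 1)) - F (Z j)) := by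
      have := mul_le_mul_of_nonneg_right hcard hgain
      linarith
    have hdiv : (F Zopt - F (Z j)) / m ≤ F (Z (j + 1)) - F (Z j) := by
      rw [div_le_iff₀ hm0]; linarith
    have he : (1 - 1 / m) * (F Zopt - F (Z j))
        = (F Zopt - F (Z j)) - (F Zopt - F (Z j)) / m := by ring
    linarith
  have iter : ∀ j ≤ M, F Zopt - F (Z j) ≤ (1 - 1 / m) ^ j * F Zopt := by
    intro j
    induction j with
    | zero => intro _; simp [hZ0, hempty]
    | succ j ih =>
      intro hj
      have hjM : j < M := hj
      have h1 := ih hjM.le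
      have h2 := step j hjM
      calc F Zopt - F (Z (j + 1)) ≤ (1 - 1 / m) * (F Zopt - F (Z j)) := h2
        _ ≤ (1 - 1 / m) * ((1 - 1 / m) ^ j * F Zopt) :=
            mul_le_mul_of_nonneg_left h1 hbase
        _ = (1 - 1 / m) ^ (j + 1) * F Zopt := by ring
  have hfin := iter M le_rfl
  have hpow : (1 - 1 / m) ^ M ≤ 1 / Real.exp 1 := by
    have h1 : 1 - 1 / m ≤ Real.exp (-(1 / m)) := by
      have := Real.add_one_le_exp (-(1 / m)); linarith
    have h2 : (1 - 1 / m) ^ M ≤ (Real.exp (-(1 / m))) ^ M :=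
      pow_le_pow_left₀ hbase h1 M
    rw [← Real.exp_nat_mul] at h2
    have h3 : (M : ℝ) * (-(1 / m)) = -1 := by
      rw [← hm]; field_simp
    rw [h3, Real.exp_neg] at h2
    simpa [one_div] using h2
  have hfinal : (1 - 1 / m) ^ M * F Zopt ≤ (1 / Real.exp 1) * F Zopt :=
    mul_le_mul_of_nonneg_right hpow hopt_nonneg
  linarith
end

section
/- For any principal submatrix: if K is positive semidefinite indexed by D and A ⊆ B ⊆ D, then det(K_B + σ²I) ≥ σ^{2(|B|−|A|)} · det(K_A + σ²I). -/
/-!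
Order `B` as `A ⊕ (B \ A)`. The Schur complement formula gives
`det (K_B + σ²I) = det (K_A + σ²I) * det (σ²I + S)`, where `S` is the Schur complement of the
positive definite block `K_A + σ²I` in the positive semidefinite matrix `K_B + diag (σ²I, 0)`;
hence `S` is positive semidefinite, all eigenvalues of `σ²I + S` are at least `σ²`, and
`det (σ²I + S) ≥ σ^{2|B \ A|}`.
-/

open Matrix

variable {D : Type*} [Fintype D] [DecidableEq D]

theorem Matrix.PosSemidef.pow_card_le_det_add_smul_one {n : Type*} [Fintype n] [DecidableEq n]
    {Q : Matrix n n ℝ} (hQ : Q.PosSemidef) {σ : ℝ} (hσ : 0 ≤ σ) :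
    σ ^ Fintype.card n ≤ (Q + σ • 1).det := by
  set U := hQ.isHermitian.eigenvectorUnitary
  have hconj : Q + σ • 1 = Unitary.conjStarAlgAut ℝ _ U
      (diagonal fun i => hQ.isHermitian.eigenvalues i + σ) := by
    conv_lhs => rw [hQ.isHermitian.spectral_theorem, ← map_one (Unitary.conjStarAlgAut ℝ _ U),
      ← map_smul, ← map_add]
    congr 1
    ext i j
    by_cases h : i = j <;> simp [h, diagonal]
  rw [hconj, Unitary.conjStarAlgAut_apply, det_mul, mul_comm, det_mul, ← mul_assoc, ← det_mul,
    Unitary.coe_star_mul_self, det_one, one_mul, det_diagonal, ← Finset.card_univ,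
    ← Finset.prod_const]
  exact Finset.prod_le_prod (fun _ _ => hσ) fun i _ =>
    le_add_of_nonneg_left (hQ.eigenvalues_nonneg i)

theorem Matrix.PosSemidef.pow_card_mul_det_toBlocks₁₁_add_smul_one_le {m n : Type*}
    [Fintype m] [Fintype n] [DecidableEq m] [DecidableEq n]
    {P : Matrix (m ⊕ n) (m ⊕ n) ℝ} (hP : P.PosSemidef) {σ : ℝ} (hσ : 0 < σ) :
    σ ^ Fintype.card n * (P.toBlocks₁₁ + σ • 1).det ≤ (P + σ • 1).det := by
  set A := P.toBlocks₁₁ + σ • 1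
  set B := P.toBlocks₁₂
  set C := P.toBlocks₂₂
  have hP_blocks : P = fromBlocks P.toBlocks₁₁ B Bᴴ C := by
    obtain ⟨-, hB, -, -⟩ := isHermitian_fromBlocks_iff.mp ((fromBlocks_toBlocks P).symm ▸ hP.1)
    rw [hB, fromBlocks_toBlocks]
  have hA : A.PosDef := .posSemidef_add (hP.submatrix Sum.inl) (PosDef.one.smul hσ)
  have := hA.isUnit.invertible
  have hschur : (C - Bᴴ * A⁻¹ * B).PosSemidef := by
    refine (hA.fromBlocks₁₁ B C).mp ?_
    have hshift : fromBlocks A B Bᴴ C = P + diagonal (Sum.elim (fun _ => σ) 0) := by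
      rw [← fromBlocks_diagonal, hP_blocks, fromBlocks_add]
      simp [A, smul_one_eq_diagonal]
    rw [hshift]
    exact hP.add (.diagonal fun i => by cases i <;> simp [hσ.le])
  have hdet : (P + σ • 1).det = A.det * ((C - Bᴴ * A⁻¹ * B) + σ • 1).det := by
    rw [hP_blocks, ← fromBlocks_one, fromBlocks_smul, fromBlocks_add, det_fromBlocks₁₁,
      invOf_eq_nonsing_inv]
    simp only [smul_zero, add_zero]
    congr 2
    abel
  rw [hdet, mul_comm]
  exact mul_le_mul_of_nonneg_left (hschur.pow_card_le_det_add_smul_one hσ.le) hA.det_pos.le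

theorem Matrix.PosSemidef.pow_card_sub_mul_det_submatrix_add_smul_one_le {ι κ : Type*}
    [Fintype ι] [Fintype κ] [DecidableEq ι] [DecidableEq κ]
    {P : Matrix ι ι ℝ} (hP : P.PosSemidef) {f : κ → ι} (hf : Function.Injective f)
    {σ : ℝ} (hσ : 0 < σ) :
    σ ^ (Fintype.card ι - Fintype.card κ) * (P.submatrix f f + σ • 1).det ≤
      (P + σ • 1).det := by
  classical
  let e : κ ⊕ {i // i ∉ Set.range f} ≃ ι :=
    ((Equiv.ofInjective f hf).sumCongr (.refl _)).trans (.sumCompl (· ∈ Set.range f))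
  have hcard : Fintype.card ι - Fintype.card κ = Fintype.card {i // i ∉ Set.range f} := by
    rw [← Fintype.card_congr e, Fintype.card_sum, Nat.add_sub_cancel_left]
  calc σ ^ (Fintype.card ι - Fintype.card κ) * (P.submatrix f f + σ • 1).det
      = σ ^ Fintype.card {i // i ∉ Set.range f} *
          ((P.submatrix e e).toBlocks₁₁ + σ • 1).det := by
        rw [hcard]; rfl
    _ ≤ (P.submatrix e e + σ • 1).det :=
        (hP.submatrix e).pow_card_mul_det_toBlocks₁₁_add_smul_one_le hσ
    _ = (P + σ • 1).det := by
        rw [← det_submatrix_equiv_self e (P + σ • 1), ← submatrix_one_equiv e]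
        rfl

/-- For nested principal submatrices `A ⊆ B` of a positive semidefinite `K`,
`det(K_B + σ²I) ≥ σ^{2(|B|−|A|)} · det(K_A + σ²I)`. -/
theorem det_nested_principal_lower_bound (K : Matrix D D ℝ) (hK : K.PosSemidef)
    (σ2 : ℝ) (hσ : 0 < σ2) (A B : Finset D) (hAB : A ⊆ B) :
    σ2 ^ (B.card - A.card) * (gram K A + σ2 • 1).det ≤ (gram K B + σ2 • 1).det := by
  have hinj : Function.Injective fun a : A => (⟨a, hAB a.2⟩ : B) :=
    fun _ _ h => Subtype.ext (Subtype.mk.inj h)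
  have key := (hK.submatrix ((↑) : B → D)).pow_card_sub_mul_det_submatrix_add_smul_one_le hinj hσ
  rwa [Fintype.card_coe, Fintype.card_coe] at key
end

section
/- Strict submodularity gap via correlation: for a positive definite kernel matrix K indexed by D with σ² = 0, if A ⊆ D, x, y ∉ A, and k(x,y)-correlations given A are nonzero, then det(K_{A∪{x,y}})·det(K_A) < det(K_{A∪{x}})·det(K_{A∪{y}}) (the determinantal form of strict submodularity of log det). -/
/-!
Schur complements: if `C` is the matrix of conditional covariances given `A`, then
`det K_{A ∪ S} = det K_A · det C_S` for every `S` disjoint from `A`. Taking `S = {x}`, `{y}` and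
`{x, y}` turns the claim into `det(K_A)² (c_xx c_yy − c_xy²) < det(K_A)² c_xx c_yy`, which holds
exactly when `c_xy ≠ 0`.
-/

open Matrix

variable {D : Type*} [Fintype D] [DecidableEq D]

/-- The cross-covariance vector `k_{A,z} = (k(a, z))_{a ∈ A}`. -/
def crossVec (K : Matrix D D ℝ) (A : Finset D) (z : D) : A → ℝ :=
  fun a => K (a : D) z

section

variable {ι : Type*} [DecidableEq ι]

/-- `crossVec Kᵀ A u` is the row `(K u a)_{a ∈ A}`, so that `condCov` is an entry of the Schur
complement of `K_A` also when `K` is not symmetric. -/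
noncomputable def condCov (K : Matrix ι ι ℝ) (A : Finset ι) (u v : ι) : ℝ :=
  K u v - crossVec Kᵀ A u ⬝ᵥ ((gram K A)⁻¹ *ᵥ crossVec K A v)

theorem condCov_of_isSymm {K : Matrix ι ι ℝ} (hK : K.IsSymm) (A : Finset ι) (u v : ι) :
    condCov K A u v = K u v - crossVec K A u ⬝ᵥ ((gram K A)⁻¹ *ᵥ crossVec K A v) := by
  rw [condCov, hK.eq]

theorem condCov_comm {K : Matrix ι ι ℝ} (hK : K.IsSymm) (A : Finset ι) (u v : ι) :
    condCov K A u v = condCov K A v u := by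
  have hinv : ((gram K A)⁻¹)ᵀ = (gram K A)⁻¹ := (hK.submatrix _).inv.eq
  rw [condCov_of_isSymm hK, condCov_of_isSymm hK, hK.apply, Matrix.dotProduct_mulVec,
    dotProduct_comm, ← Matrix.mulVec_transpose, hinv]

theorem det_gram_union (K : Matrix ι ι ℝ) {A S : Finset ι} (hA : IsUnit (gram K A).det)
    (hSA : Disjoint S A) :
    (gram K (S ∪ A)).det = (gram K A).det * (Matrix.of fun i j : S => condCov K A i j).det := by
  let := (gram K A).invertibleOfIsUnitDet hA
  have hblocks : (gram K (S ∪ A)).submatrix (Equiv.Finset.union S A hSA)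
      (Equiv.Finset.union S A hSA) =
      fromBlocks (gram K S) (K.submatrix (↑) (↑)) (K.submatrix (↑) (↑)) (gram K A) := by
    ext (i | i) (j | j) <;> rfl
  rw [← Matrix.det_submatrix_equiv_self (Equiv.Finset.union S A hSA), hblocks,
    Matrix.det_fromBlocks₂₂, invOf_eq_nonsing_inv]
  congr 2
  ext i j
  simp only [Matrix.sub_apply, Matrix.mul_apply, Matrix.submatrix_apply, Matrix.of_apply, condCov,
    crossVec, _root_.gram, dotProduct, Matrix.mulVec, Matrix.transpose_apply, Finset.mul_sum,
    Finset.sum_mul, mul_assoc]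
  rw [Finset.sum_comm]

theorem Matrix.det_of_pair {R : Type*} [CommRing R] {x y : ι} (hxy : x ≠ y) (f : ι → ι → R) :
    (Matrix.of fun i j : ({x, y} : Finset ι) => f i j).det = f x x * f y y - f x y * f y x := by
  let e : Fin 2 ≃ ({x, y} : Finset ι) := Equiv.ofBijective ![⟨x, by simp⟩, ⟨y, by simp⟩] <| by
    refine (Fintype.bijective_iff_injective_and_card _).2 ⟨fun i j h => ?_, by simp [hxy]⟩
    fin_cases i <;> fin_cases j <;> simp_all [hxy.symm]
  rw [← Matrix.det_submatrix_equiv_self e, Matrix.det_fin_two]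
  rfl

theorem det_gram_insert (K : Matrix ι ι ℝ) {A : Finset ι} (hA : IsUnit (gram K A).det) {x : ι}
    (hx : x ∉ A) : (gram K (insert x A)).det = (gram K A).det * condCov K A x x := by
  rw [Finset.insert_eq, det_gram_union K hA (Finset.disjoint_singleton_left.2 hx),
    Matrix.det_unique (n := ({x} : Finset ι))]
  rfl

theorem det_gram_insert_insert (K : Matrix ι ι ℝ) {A : Finset ι} (hA : IsUnit (gram K A).det)
    {x y : ι} (hx : x ∉ A) (hy : y ∉ A) (hxy : x ≠ y) :
    (gram K (insert x (insert y A))).det = (gram K A).det *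
      (condCov K A x x * condCov K A y y - condCov K A x y * condCov K A y x) := by
  have hxyA : Disjoint {x, y} A := by simp [hx, hy]
  rw [show insert x (insert y A) = {x, y} ∪ A by simp, det_gram_union K hA hxyA,
    Matrix.det_of_pair hxy]

end

/-- Strict submodularity gap via correlation: for positive definite `K`, if
`x, y ∉ A` are distinct and the conditional covariance
`k(x,y) − k_{A,x}ᵀ K_A⁻¹ k_{A,y}` is nonzero, then
`det(K_{A∪{x,y}})·det(K_A) < det(K_{A∪{x}})·det(K_{A∪{y}})`. -/
theorem strict_koteljanskii (K : Matrix D D ℝ) (hK : K.PosDef)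
    (A : Finset D) (x y : D) (hx : x ∉ A) (hy : y ∉ A) (hxy : x ≠ y)
    (hcorr : K x y - crossVec K A x ⬝ᵥ ((gram K A)⁻¹ *ᵥ crossVec K A y) ≠ 0) :
    (gram K (insert x (insert y A))).det * (gram K A).det <
      (gram K (insert x A)).det * (gram K (insert y A)).det := by
  have hsymm : K.IsSymm := isHermitian_iff_isSymm.1 hK.isHermitian
  have hA : 0 < (gram K A).det := (hK.submatrix Subtype.val_injective).det_pos
  rw [← condCov_of_isSymm hsymm] at hcorr
  rw [det_gram_insert_insert K hA.ne'.isUnit hx hy hxy, det_gram_insert K hA.ne'.isUnit hx,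
    det_gram_insert K hA.ne'.isUnit hy, condCov_comm hsymm A y x]
  have hgap : 0 < ((gram K A).det * condCov K A x y) ^ 2 := by positivity
  linear_combination hgap
end
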